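/- For every z ∈ ℂ with |z| ≥ 1, one has |1 − √(1−z²)| ≤ |z| ≤ |1 + √(1−z²)|. -/

import Mathlib

/-- The principal (arithmetic) complex square root: the square root with
positive real part, or with zero real part and nonnegative imaginary part. -/
noncomputable def csqrt (z : ℂ) : ℂ := z ^ (1 / 2 : ℂ)

lemma csqrt_sq (z : ℂ) : csqrt z ^ 2 = z := by
  simp [csqrt, one_div, Complex.cpow_nat_inv_pow z (n := 2) two_ne_zero]

lemma csqrt_re_nonneg (z : ℂ) : 0 ≤ (csqrt z).re := by
  rcases eq_or_ne z 0 with rfl | hz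
  · simp [csqrt, Complex.zero_cpow (by norm_num : (1/2 : ℂ) ≠ 0)]
  · rw [csqrt, Complex.cpow_def_of_ne_zero hz, Complex.exp_re]
    apply mul_nonneg (Real.exp_pos _).le
    apply Real.cos_nonneg_of_mem_Icc
    have h1 := Complex.arg_le_pi z
    have h2 := Complex.neg_pi_lt_arg z
    have : (Complex.log z * (1/2 : ℂ)).im = z.arg / 2 := by
      simp [Complex.log_im, Complex.mul_im, Complex.log_re]
      ring
    rw [this]
    constructor <;> [linarith; linarith]

/-- For every `z ∈ ℂ` with `|z| ≥ 1`,
`|1 − √(1−z²)| ≤ |z| ≤ |1 + √(1−z²)|`. -/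
theorem stmt4 (z : ℂ) (hz : 1 ≤ ‖z‖) :
    ‖1 - csqrt (1 - z ^ 2)‖ ≤ ‖z‖ ∧
    ‖z‖ ≤ ‖1 + csqrt (1 - z ^ 2)‖ := by
  set w := csqrt (1 - z ^ 2) with hw
  have hsq : w ^ 2 = 1 - z ^ 2 := csqrt_sq _
  have hre : 0 ≤ w.re := csqrt_re_nonneg _
  have hprod : ‖1 - w‖ * ‖1 + w‖ = ‖z‖ ^ 2 := by
    rw [← norm_mul, ← norm_pow]
    congr 1
    have : (1 - w) * (1 + w) = 1 - w ^ 2 := by ring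
    rw [this, hsq]; ring
  have hle : ‖1 - w‖ ≤ ‖1 + w‖ := by
    have h1 : ‖1 - w‖ ^ 2 = Complex.normSq (1 - w) := Complex.sq_norm _
    have h2 : ‖1 + w‖ ^ 2 = Complex.normSq (1 + w) := Complex.sq_norm _
    have hd : Complex.normSq (1 + w) - Complex.normSq (1 - w) = 4 * w.re := by
      simp [Complex.normSq_apply, Complex.add_re, Complex.sub_re, Complex.add_im,
        Complex.sub_im]
      ring
    have := norm_nonneg (1 - w)
    have := norm_nonneg (1 + w)
    nlinarith
  have h1 := norm_nonneg (1 - w)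
  have h2 := norm_nonneg (1 + w)
  have h3 := norm_nonneg z
  constructor <;> nlinarith
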